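/- arXiv:1505.05054 — 4 statements merged into one kernel-verified Lean document; each statement's English description precedes it below -/
import Mathlib

section
/- With F ∈ ℚ[X,Y,Z] a square-free homogeneous polynomial with integer coefficients and q a prime with F_q ≠ 0, the total Tjurina number satisfies τ(Γ) ≤ τ(Γ_q), where Γ and Γ_q are the curves defined by F and its reduction F_q. -/
set_option synthInstance.maxHeartbeats 1000000
set_option maxHeartbeats 2000000

/-- The Hilbert function of the graded quotient `K[X,Y,Z]/J` at degree `t`:
the dimension of the image of the degree-`t` homogeneous part. -/
noncomputable def hilbertFn (K : Type) [Field K] (J : Ideal (MvPolynomial (Fin 3) K))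
    (t : ℕ) : ℕ :=
  Module.finrank K
    ((MvPolynomial.homogeneousSubmodule (Fin 3) K t).map
      (Ideal.Quotient.mkₐ K J).toLinearMap)

/-- The total Tjurina number of the projective plane curve defined by a homogeneous
polynomial `F`: the degree of `Proj(K[X,Y,Z]/⟨F_X,F_Y,F_Z⟩)`, i.e. the eventual
(limsup) value of the Hilbert function of the Tjurina algebra, as an extended
natural number. -/
noncomputable def totalTjurina (K : Type) [Field K] (F : MvPolynomial (Fin 3) K) : ℕ∞ :=
  Filter.limsup
    (fun t => (hilbertFn K
        (Ideal.span {MvPolynomial.pderiv 0 F, MvPolynomial.pderiv 1 F,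
          MvPolynomial.pderiv 2 F}) t : ℕ∞))
    Filter.atTop

/-!
The degree-`t` part of an ideal generated by homogeneous forms `g i` of degrees `e i` is spanned
by the products `m * g i` with `m` a monomial of degree `t - e i`. For integral forms this
spanning set is the reduction of one finite set `S` of integral polynomials, both over `ℚ` and
over `𝔽_q`. A basis of the `𝔽_q`-span of `S mod q` lifts to elements of `S` which are
`ℤ`-linearly independent (a primitive relation would survive reduction mod `q`), hence
`ℚ`-linearly independent. So the degree-`t` part of the ideal can only shrink mod `q`, i.e.
the Hilbert function can only grow, and so does its limsup.
-/

open MvPolynomial Submodule Module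

lemma Submodule.finrank_map_add_finrank_inf_ker {K M N : Type*} [DivisionRing K]
    [AddCommGroup M] [Module K M] [AddCommGroup N] [Module K N] (f : M →ₗ[K] N)
    (V : Submodule K M) [FiniteDimensional K V] :
    finrank K (V.map f) + finrank K ↥(V ⊓ LinearMap.ker f) = finrank K V := by
  rw [← LinearMap.range_domRestrict,
    ← LinearMap.finrank_range_add_finrank_ker (f.domRestrict V), LinearMap.ker_domRestrict,
    ← (Submodule.comapSubtypeEquivOfLe inf_le_left).finrank_eq, Submodule.comap_inf,
    Submodule.comap_subtype_self, top_inf_eq]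

lemma LinearIndependent.of_zmod_comp {p : ℕ} [Fact p.Prime] {ι M N : Type*} [AddCommGroup M]
    [IsAddTorsionFree M] [AddCommGroup N] [Module (ZMod p) N] (f : M →+ N) {v : ι → M}
    (hv : LinearIndependent (ZMod p) (f ∘ v)) : LinearIndependent ℤ v := by
  rw [linearIndependent_iff']
  intro s c hrel i hi
  by_contra hci
  set G := s.gcd c
  have hG : G ≠ 0 := fun h => hci (Finset.gcd_eq_zero_iff.mp h i hi)
  have hrel_primitive : ∑ j ∈ s, (c j / G) • v j = 0 := by
    refine zsmul_right_injective hG ?_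
    simp only [smul_zero, Finset.smul_sum, smul_smul]
    rw [← hrel]
    refine Finset.sum_congr rfl fun j hj => ?_
    rw [Int.mul_ediv_cancel' (Finset.gcd_dvd hj)]
  have hdvd : ∀ j ∈ s, (p : ℤ) ∣ c j / G := by
    intro j hj
    rw [← ZMod.intCast_zmod_eq_zero_iff_dvd]
    refine linearIndependent_iff'.mp hv s (fun j => ((c j / G : ℤ) : ZMod p)) ?_ j hj
    simpa [map_sum, map_zsmul, Int.cast_smul_eq_zsmul] using congrArg f hrel_primitive
  have hdvd_one := Finset.dvd_gcd hdvd
  rw [Finset.gcd_div_eq_one hi hci] at hdvd_one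
  exact (Fact.out : p.Prime).not_dvd_one (by exact_mod_cast hdvd_one)

namespace MvPolynomial

lemma finrank_homogeneousSubmodule {σ R : Type*} [CommRing R] [StrongRankCondition R] (n : ℕ) :
    finrank R (homogeneousSubmodule σ R n) = Nat.card {m : σ →₀ ℕ | m.degree = n} := by
  rw [homogeneousSubmodule_eq_finsupp_supported]
  exact finrank_eq_nat_card_basis (basisRestrictSupport R _)

variable {σ R : Type*} [CommSemiring R]

attribute [local instance] MvPolynomial.gradedAlgebra in
lemma homogeneousComponent_mul_of_isHomogeneous_right {g : MvPolynomial σ R} {e : ℕ}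
    (hg : g.IsHomogeneous e) (r : MvPolynomial σ R) (t : ℕ) :
    homogeneousComponent t (r * g) =
      if e ≤ t then homogeneousComponent (t - e) r * g else 0 := by
  simp only [← decomposition.decompose'_apply]
  exact DirectSum.coe_decompose_mul_of_right_mem (homogeneousSubmodule σ R) t hg

lemma mul_mem_span_monomial_mul {p : MvPolynomial σ R} {s : ℕ} (hp : p.IsHomogeneous s)
    (g : MvPolynomial σ R) :
    p * g ∈ span R ((fun m => monomial m 1 * g) '' {m : σ →₀ ℕ | m.degree = s}) := by
  have hp_span : p ∈ span R ((monomial · (1 : R)) '' {m : σ →₀ ℕ | m.degree = s}) := by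
    rw [← restrictSupport_eq_span, restrictSupport, ← homogeneousSubmodule_eq_finsupp_supported]
    exact hp
  have := Submodule.mem_map_of_mem (f := LinearMap.mulRight R g) hp_span
  rwa [Submodule.map_span, Set.image_image] at this

def monomialMultiples {ι : Type*} (g : ι → MvPolynomial σ R) (e : ι → ℕ) (t : ℕ) :
    Set (MvPolynomial σ R) :=
  ⋃ i, (fun m => monomial m 1 * g i) '' {m : σ →₀ ℕ | m.degree + e i = t}

variable {ι : Type*} {g : ι → MvPolynomial σ R} {e : ι → ℕ}

lemma monomialMultiples_finite [Finite σ] [Finite ι] (g : ι → MvPolynomial σ R)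
    (e : ι → ℕ) (t : ℕ) : (monomialMultiples g e t).Finite :=
  Set.finite_iUnion fun i => ((Finsupp.finite_of_degree_le t).subset
    fun m (hm : m.degree + e i = t) => Nat.le.intro hm).image _

lemma image_map_monomialMultiples {S : Type*} [CommSemiring S] (f : R →+* S) (t : ℕ) :
    map f '' monomialMultiples g e t = monomialMultiples (fun i => map f (g i)) e t := by
  simp only [monomialMultiples, Set.image_iUnion, Set.image_image, map_mul, map_monomial,
    map_one]

lemma homogeneousSubmodule_inf_span_eq_span_monomialMultiples [Fintype ι]
    (hg : ∀ i, (g i).IsHomogeneous (e i)) (t : ℕ) :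
    homogeneousSubmodule σ R t ⊓ (Ideal.span (Set.range g)).restrictScalars R =
      span R (monomialMultiples g e t) := by
  apply le_antisymm
  · rintro x ⟨hxt, hxJ⟩
    obtain ⟨c, rfl⟩ := Ideal.mem_span_range_iff_exists_fun.mp hxJ
    rw [← homogeneousComponent_eq_self hxt, map_sum]
    refine sum_mem fun i _ => ?_
    rw [homogeneousComponent_mul_of_isHomogeneous_right (hg i)]
    split_ifs with hle
    · refine span_mono ?_ (mul_mem_span_monomial_mul (homogeneousComponent_isHomogeneous _ _) _)
      rintro _ ⟨m, hm : m.degree = t - e i, rfl⟩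
      exact Set.mem_iUnion.mpr ⟨i, m, show m.degree + e i = t by omega, rfl⟩
    · exact zero_mem _
  · rw [span_le]
    rintro _ ⟨_, ⟨i, rfl⟩, m, hm, rfl⟩
    refine ⟨?_, Ideal.mul_mem_left _ _ (Ideal.subset_span ⟨i, rfl⟩)⟩
    rw [SetLike.mem_coe, mem_homogeneousSubmodule, ← (hm : m.degree + e i = t)]
    exact (isHomogeneous_monomial _ rfl).mul (hg i)

lemma finrank_span_image_map_zmod_le (p : ℕ) [Fact p.Prime] {S : Set (MvPolynomial σ ℤ)}
    (hS : S.Finite) :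
    finrank (ZMod p) (span (ZMod p) (map (Int.castRingHom (ZMod p)) '' S)) ≤
      finrank ℚ (span ℚ (map (Int.castRingHom ℚ) '' S)) := by
  have : Finite S := hS
  obtain ⟨κ, a, ha, hspan, hli⟩ := exists_linearIndependent' (ZMod p)
    (fun x : S => map (Int.castRingHom (ZMod p)) x.1)
  have := Finite.of_injective a ha
  have := Fintype.ofFinite κ
  have hliZ : LinearIndependent ℤ (fun k => (a k).1) :=
    hli.of_zmod_comp (map (Int.castRingHom (ZMod p))).toAddMonoidHom
  have hliQ : LinearIndependent ℚ (fun k => map (Int.castRingHom ℚ) (a k).1) := by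
    rw [← LinearIndependent.iff_fractionRing ℤ ℚ]
    exact hliZ.map' (map (Int.castRingHom ℚ)).toAddMonoidHom.toIntLinearMap
      (LinearMap.ker_eq_bot.mpr (map_injective _ Int.cast_injective))
  have : FiniteDimensional ℚ (span ℚ (map (Int.castRingHom ℚ) '' S)) :=
    FiniteDimensional.span_of_finite ℚ (hS.image _)
  calc finrank (ZMod p) (span (ZMod p) (map (Int.castRingHom (ZMod p)) '' S))
      = Fintype.card κ := by
        rw [Set.image_eq_range, ← hspan, finrank_span_eq_card hli]
    _ = finrank ℚ (span ℚ (Set.range fun k => map (Int.castRingHom ℚ) (a k).1)) :=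
        (finrank_span_eq_card hliQ).symm
    _ ≤ finrank ℚ (span ℚ (map (Int.castRingHom ℚ) '' S)) :=
        Submodule.finrank_mono (span_mono (Set.range_subset_iff.mpr fun k => ⟨_, (a k).2, rfl⟩))

noncomputable def jacobianIdeal (F : MvPolynomial σ R) : Ideal (MvPolynomial σ R) :=
  Ideal.span (Set.range fun i => pderiv i F)

lemma span_pderiv_eq_jacobianIdeal (F : MvPolynomial (Fin 3) R) :
    Ideal.span {pderiv 0 F, pderiv 1 F, pderiv 2 F} = jacobianIdeal F := by
  rw [jacobianIdeal]
  congr 1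
  ext
  simp [Fin.exists_fin_succ, eq_comm]

end MvPolynomial

lemma hilbertFn_add_finrank_inf (K : Type) [Field K] (J : Ideal (MvPolynomial (Fin 3) K))
    (t : ℕ) :
    hilbertFn K J t + finrank K ↥(homogeneousSubmodule (Fin 3) K t ⊓ J.restrictScalars K) =
      Nat.card {m : Fin 3 →₀ ℕ | m.degree = t} := by
  have : Module.Finite K (homogeneousSubmodule (Fin 3) K t) :=
    Module.Finite.iff_fg.mpr (homogeneousSubmodule_fg _ _ t)
  have hker : LinearMap.ker (Ideal.Quotient.mkₐ K J).toLinearMap = J.restrictScalars K := by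
    ext
    simp [Ideal.Quotient.eq_zero_iff_mem]
  rw [← finrank_homogeneousSubmodule (R := K), ← hker]
  exact finrank_map_add_finrank_inf_ker _ _

lemma hilbertFn_span_map_rat_le_zmod {ι : Type*} [Fintype ι] (p : ℕ) [Fact p.Prime]
    {g : ι → MvPolynomial (Fin 3) ℤ} {e : ι → ℕ} (hg : ∀ i, (g i).IsHomogeneous (e i))
    (t : ℕ) :
    hilbertFn ℚ (Ideal.span (Set.range fun i => map (Int.castRingHom ℚ) (g i))) t ≤
      hilbertFn (ZMod p)
        (Ideal.span (Set.range fun i => map (Int.castRingHom (ZMod p)) (g i))) t := by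
  have hQ := hilbertFn_add_finrank_inf ℚ
    (Ideal.span (Set.range fun i => map (Int.castRingHom ℚ) (g i))) t
  have hp := hilbertFn_add_finrank_inf (ZMod p)
    (Ideal.span (Set.range fun i => map (Int.castRingHom (ZMod p)) (g i))) t
  rw [homogeneousSubmodule_inf_span_eq_span_monomialMultiples (e := e) fun i => (hg i).map _,
    ← image_map_monomialMultiples] at hQ hp
  have := finrank_span_image_map_zmod_le p (monomialMultiples_finite g e t)
  omega

lemma hilbertFn_jacobianIdeal_map_rat_le_zmod {F : MvPolynomial (Fin 3) ℤ} {d : ℕ}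
    (hF : F.IsHomogeneous d) (p : ℕ) [Fact p.Prime] (t : ℕ) :
    hilbertFn ℚ (jacobianIdeal (F.map (Int.castRingHom ℚ))) t ≤
      hilbertFn (ZMod p) (jacobianIdeal (F.map (Int.castRingHom (ZMod p)))) t := by
  simpa only [jacobianIdeal, pderiv_map] using
    hilbertFn_span_map_rat_le_zmod p (g := fun i => pderiv i F) (fun _ => hF.pderiv) t

theorem totalTjurina_le_totalTjurina_mod_q_general
    (F : MvPolynomial (Fin 3) ℤ) (d : ℕ)
    (hhom : (F.map (Int.castRingHom ℚ)).IsHomogeneous d)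
    (q : ℕ) [Fact q.Prime] :
    totalTjurina ℚ (F.map (Int.castRingHom ℚ)) ≤
      totalTjurina (ZMod q) (F.map (Int.castRingHom (ZMod q))) := by
  have hF : F.IsHomogeneous d := hhom.of_map (RingHom.injective_int _)
  simp only [totalTjurina, span_pderiv_eq_jacobianIdeal]
  exact Filter.limsup_le_limsup (Filter.Eventually.of_forall fun t =>
    ENat.natCast_le_natCast.mpr (hilbertFn_jacobianIdeal_map_rat_le_zmod hF q t))

/-- **Semicontinuity of the total Tjurina number under reduction mod `q`.** -/
theorem totalTjurina_le_totalTjurina_mod_q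
    (F : MvPolynomial (Fin 3) ℤ) (d : ℕ) (hd : 0 < d)
    (hhom : (F.map (Int.castRingHom ℚ)).IsHomogeneous d)
    (hsq : Squarefree (F.map (Int.castRingHom ℚ)))
    (q : ℕ) [Fact q.Prime]
    (hq : F.map (Int.castRingHom (ZMod q)) ≠ 0) :
    totalTjurina ℚ (F.map (Int.castRingHom ℚ)) ≤
      totalTjurina (ZMod q) (F.map (Int.castRingHom (ZMod q))) :=
  totalTjurina_le_totalTjurina_mod_q_general F d hhom q
end

section
/- Let g ∈ K[[X]][Y] be monic of degree m in Y with Puiseux expansions γ_1, …, γ_m, and fix 1 ≤ d ≤ m−1. For a subset A ⊆ {1,…,m} of cardinality d, define Int(A) = min over i ∉ A of Σ_{j ∈ A} v(γ_i − γ_j). Choose Ã of cardinality d maximizing Int, and set p̃ = Π_{j∈Ã}(Y − γ_j). Then v_g(p̃) = Int(Ã), and this is the maximum of v_g(q) over all q ∈ L{{X}}[Y] that are monic of degree d in Y. -/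
open Polynomial

/-- The map from `K[[X]]` into Hahn series over `L` with rational exponents
(a universe for Puiseux series). -/
noncomputable def toHahn (K L : Type) [Field K] [Field L] [Algebra K L] :
    PowerSeries K →+* HahnSeries ℚ L :=
  (HahnSeries.ofPowerSeries ℚ L).comp (PowerSeries.map (algebraMap K L))

/-- A Hahn series is a Puiseux series if its exponents have a common denominator. -/
def IsPuiseux {L : Type} [Zero L] (γ : HahnSeries ℚ L) : Prop :=
  ∃ m : ℕ, m ≠ 0 ∧ ∀ q ∈ γ.support, ∃ k : ℤ, q = (k : ℚ) / m

/-- The valuation `v_g(q) = min_i v_{γ_i}(q)` of a polynomial `q` at the family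
`γ` of Puiseux expansions of `g`. -/
noncomputable def vg {L : Type} [Field L] {m : ℕ} (γ : Fin m → HahnSeries ℚ L)
    (q : Polynomial (HahnSeries ℚ L)) : WithTop ℚ :=
  Finset.univ.inf fun i => (q.eval (γ i)).orderTop

/-- `Int(A) = min_{i ∉ A} ∑_{j ∈ A} v(γ_i - γ_j)`. -/
noncomputable def intNum {L : Type} [Field L] {m : ℕ} (γ : Fin m → HahnSeries ℚ L)
    (A : Finset (Fin m)) : WithTop ℚ :=
  Aᶜ.inf fun i => ∑ j ∈ A, (γ i - γ j).orderTop

/-! For a monic `q` of degree `d`, choose `d + 1` indices `S` with distinct roots minimising the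
valuation of the discriminant of `∏_{k ∈ S} (Y - γ_k)`. Lagrange interpolation gives
`1 = ∑_{k ∈ S} q(γ_k) / ∏_{l ∈ S \ k} (γ_k - γ_l)`, so by the ultrametric inequality some `k ∈ S`
has `v(q(γ_k)) ≤ ∑_{l ∈ S \ k} v(γ_k - γ_l)`. Exchanging `k` for any `i ∉ S \ k` does not decrease
that valuation, which bounds this sum by `Int(S \ k)`. If the roots take at most `d` values,
some `A` of size `d` meets all of them and `Int(A) = ⊤`. For `p̃` itself,
`v_{γ_i}(p̃) = ∑_{j ∈ Ã} v(γ_i - γ_j)` is `⊤` for `i ∈ Ã`, so `v_g(p̃) = Int(Ã)`. -/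

open Finset

theorem HahnSeries.orderTop_prod {Γ R ι : Type*} [AddCommMonoid Γ] [LinearOrder Γ]
    [IsOrderedCancelAddMonoid Γ] [CommSemiring R] [NoZeroDivisors R] [Nontrivial R]
    (s : Finset ι) (f : ι → HahnSeries Γ R) :
    (∏ i ∈ s, f i).orderTop = ∑ i ∈ s, (f i).orderTop := by
  classical
  induction s using Finset.induction_on with
  | empty => simp
  | insert a s ha ih => rw [prod_insert ha, sum_insert ha, orderTop_mul, ih]

theorem AddValuation.exists_map_eval_le_map_prod_sub {F Γ₀ ι : Type*} [Field F]
    [LinearOrderedAddCommMonoidWithTop Γ₀] [DecidableEq ι] (v : AddValuation F Γ₀)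
    {s : Finset ι} {x : ι → F} (hx : Set.InjOn x s) {p : F[X]} (hp : p.Monic)
    (hs : #s = p.natDegree + 1) :
    ∃ i ∈ s, v (p.eval (x i)) ≤ v (∏ j ∈ s.erase i, (x i - x j)) := by
  have hsum := Lagrange.leadingCoeff_eq_sum hx (P := p)
    (by rw [degree_eq_natDegree hp.ne_zero, hs]; norm_cast)
  rw [hp.leadingCoeff] at hsum
  obtain ⟨i, hi, hmin⟩ := s.exists_min_image
    (fun i => v (p.eval (x i) / ∏ j ∈ s.erase i, (x i - x j))) (card_pos.1 (by omega))
  have hle : v (p.eval (x i) / ∏ j ∈ s.erase i, (x i - x j)) ≤ 0 := by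
    rw [← v.map_one, hsum]
    exact v.map_le_sum hmin
  have hP : ∏ j ∈ s.erase i, (x i - x j) ≠ 0 := prod_ne_zero_iff.2 fun j hj =>
    sub_ne_zero.2 fun h => ne_of_mem_erase hj (hx (mem_of_mem_erase hj) hi h.symm)
  refine ⟨i, hi, ?_⟩
  calc v (p.eval (x i))
      = v (p.eval (x i) / ∏ j ∈ s.erase i, (x i - x j)) + v (∏ j ∈ s.erase i, (x i - x j)) := by
        rw [← v.map_mul, div_mul_cancel₀ _ hP]
    _ ≤ v (∏ j ∈ s.erase i, (x i - x j)) := add_le_of_nonpos_left hle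

theorem HahnSeries.orderTop_sub_comm {Γ R : Type*} [PartialOrder Γ] [Ring R]
    (a b : HahnSeries Γ R) : (a - b).orderTop = (b - a).orderTop := by
  rw [← orderTop_neg, neg_sub]

section

variable {L : Type} [Field L]

/-- The valuation of the discriminant of `∏ k ∈ S, (X - C (γ k))`. -/
noncomputable def discrOrder {ι : Type*} [DecidableEq ι] (γ : ι → HahnSeries ℚ L)
    (S : Finset ι) : WithTop ℚ :=
  ∑ k ∈ S, ∑ l ∈ S.erase k, (γ k - γ l).orderTop

variable {ι : Type*} [DecidableEq ι] (γ : ι → HahnSeries ℚ L)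

theorem discrOrder_insert {A : Finset ι} {i : ι} (hi : i ∉ A) :
    discrOrder γ (insert i A) =
      discrOrder γ A + (∑ j ∈ A, (γ i - γ j).orderTop + ∑ j ∈ A, (γ i - γ j).orderTop) := by
  have hrow : ∀ k ∈ A, ∑ l ∈ (insert i A).erase k, (γ k - γ l).orderTop
      = (γ i - γ k).orderTop + ∑ l ∈ A.erase k, (γ k - γ l).orderTop := fun k hk => by
    rw [erase_insert_of_ne (ne_of_mem_of_not_mem hk hi).symm,
      sum_insert fun h => hi (mem_of_mem_erase h), HahnSeries.orderTop_sub_comm]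
  rw [discrOrder, discrOrder, sum_insert hi, erase_insert hi, sum_congr rfl hrow,
    sum_add_distrib]
  abel

theorem discrOrder_ne_top_iff {S : Finset ι} : discrOrder γ S ≠ ⊤ ↔ Set.InjOn γ S := by
  simp only [discrOrder, ne_eq, WithTop.sum_eq_top, HahnSeries.orderTop_eq_top, sub_eq_zero,
    mem_erase, Set.InjOn, mem_coe]
  constructor
  · intro h a ha b hb hab
    by_contra hne
    exact h ⟨a, ha, b, ⟨Ne.symm hne, hb⟩, hab⟩
  · rintro h ⟨a, ha, b, ⟨hne, hb⟩, hab⟩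
    exact hne (h ha hb hab).symm

end

section

variable {L : Type} [Field L] {m : ℕ} (γ : Fin m → HahnSeries ℚ L)

theorem vg_prod_X_sub_C (A : Finset (Fin m)) :
    vg γ (∏ j ∈ A, (X - C (γ j))) = intNum γ A := by
  have heval : ∀ i, ((∏ j ∈ A, (X - C (γ j))).eval (γ i)).orderTop
      = ∑ j ∈ A, (γ i - γ j).orderTop := fun i => by
    simp only [eval_prod, eval_sub, eval_X, eval_C, HahnSeries.orderTop_prod]
  have hA : (A.inf fun i => ∑ j ∈ A, (γ i - γ j).orderTop) = ⊤ :=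
    (Finset.inf_eq_top_iff _ _).2 fun i hi => WithTop.sum_eq_top.2 ⟨i, hi, by simp⟩
  rw [vg, inf_congr rfl fun i _ => heval i, ← union_compl A, inf_union, hA, top_inf_eq, intNum]

theorem sum_orderTop_sub_le_intNum_erase {S : Finset (Fin m)} (hfin : discrOrder γ S ≠ ⊤)
    (hmin : ∀ T : Finset (Fin m), #T = #S → discrOrder γ S ≤ discrOrder γ T) {k : Fin m}
    (hk : k ∈ S) : ∑ l ∈ S.erase k, (γ k - γ l).orderTop ≤ intNum γ (S.erase k) := by
  have hS := discrOrder_insert γ (notMem_erase k S)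
  rw [insert_erase hk] at hS
  have hA : discrOrder γ (S.erase k) ≠ ⊤ := fun h => hfin (by rw [hS, h, top_add])
  refine Finset.le_inf fun i hi => ?_
  rw [mem_compl] at hi
  have h := hmin _ (by rw [card_insert_of_notMem hi, card_erase_add_one hk])
  rw [hS, discrOrder_insert γ hi, WithTop.add_le_add_iff_left hA] at h
  exact le_of_not_gt fun hlt => (WithTop.add_lt_add hlt hlt).not_ge h

theorem exists_card_eq_intNum_eq_top {d : ℕ} (hdm : d ≤ m)
    (h : ∀ S : Finset (Fin m), #S = d + 1 → ¬ Set.InjOn γ S) :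
    ∃ A : Finset (Fin m), #A = d ∧ intNum γ A = ⊤ := by
  classical
  obtain ⟨t, -, htinj, htim⟩ :=
    exists_subset_injOn_image_eq_of_surjOn (f := γ) Set.univ (univ.image γ) (by simp [Set.SurjOn])
  have ht : #t ≤ d := by
    by_contra! hlt
    obtain ⟨S, hSt, hS⟩ := exists_subset_card_eq hlt
    exact h S hS (htinj.mono hSt)
  obtain ⟨A, htA, -, hA⟩ := exists_subsuperset_card_eq (subset_univ t) ht (by simpa using hdm)
  refine ⟨A, hA, (Finset.inf_eq_top_iff _ _).2 fun i _ => ?_⟩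
  obtain ⟨j, hj, hji⟩ := mem_image.1 (htim ▸ mem_image_of_mem γ (mem_univ i))
  exact WithTop.sum_eq_top.2 ⟨j, htA hj, by simp [hji]⟩

theorem exists_card_eq_vg_le_intNum {d : ℕ} (hdm : d ≤ m) {q : Polynomial (HahnSeries ℚ L)}
    (hq : q.Monic) (hqd : q.natDegree = d) :
    ∃ A : Finset (Fin m), #A = d ∧ vg γ q ≤ intNum γ A := by
  by_cases hinj : ∃ S : Finset (Fin m), #S = d + 1 ∧ Set.InjOn γ S
  · obtain ⟨S₀, hS₀, hinj₀⟩ := hinj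
    obtain ⟨S, hS, hmin⟩ := exists_min_image (powersetCard (d + 1) univ) (discrOrder γ)
      ⟨S₀, mem_powersetCard.2 ⟨subset_univ _, hS₀⟩⟩
    have hScard : #S = d + 1 := (mem_powersetCard.1 hS).2
    have hfin : discrOrder γ S ≠ ⊤ :=
      ne_top_of_le_ne_top ((discrOrder_ne_top_iff γ).2 hinj₀)
        (hmin S₀ (mem_powersetCard.2 ⟨subset_univ _, hS₀⟩))
    obtain ⟨k, hk, hle⟩ := (HahnSeries.addVal ℚ L).exists_map_eval_le_map_prod_sub
      ((discrOrder_ne_top_iff γ).1 hfin) hq (by rw [hScard, hqd])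
    refine ⟨S.erase k, by rw [card_erase_of_mem hk, hScard, Nat.add_sub_cancel], ?_⟩
    calc vg γ q ≤ (q.eval (γ k)).orderTop := inf_le (mem_univ k)
      _ ≤ ∑ l ∈ S.erase k, (γ k - γ l).orderTop := by
        simpa only [HahnSeries.addVal_apply, HahnSeries.orderTop_prod] using hle
      _ ≤ intNum γ (S.erase k) := sum_orderTop_sub_le_intNum_erase γ hfin
        (fun T hT => hmin T (mem_powersetCard.2 ⟨subset_univ _, hT.trans hScard⟩)) hk
  · simp only [not_exists, not_and] at hinj
    obtain ⟨A, hA, htop⟩ := exists_card_eq_intNum_eq_top γ hdm hinj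
    exact ⟨A, hA, htop ▸ le_top⟩

end

theorem maximal_valuation_monic_degree_d_general
    (L : Type) [Field L]
    (m d : ℕ)
    (γ : Fin m → HahnSeries ℚ L)
    (Atil : Finset (Fin m)) (hcard : Atil.card = d)
    (hmax : ∀ A : Finset (Fin m), A.card = d → intNum γ A ≤ intNum γ Atil) :
    vg γ (∏ j ∈ Atil, (X - C (γ j))) = intNum γ Atil ∧
      ∀ q : Polynomial (HahnSeries ℚ L), q.Monic → q.natDegree = d →
        (∀ i, IsPuiseux (q.coeff i)) → vg γ q ≤ intNum γ Atil := by
  refine ⟨vg_prod_X_sub_C γ Atil, fun q hq hqd _ => ?_⟩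
  have hdm : d ≤ m := hcard ▸ (card_le_univ Atil).trans_eq (Fintype.card_fin m)
  obtain ⟨A, hA, hle⟩ := exists_card_eq_vg_le_intNum γ hdm hq hqd
  exact hle.trans (hmax A hA)

theorem maximal_valuation_monic_degree_d
    (K L : Type) [Field K] [Field L] [Algebra K L] [CharZero K] [IsAlgClosed L]
    (m d : ℕ) (hd : 1 ≤ d) (hdm : d < m)
    (g : Polynomial (PowerSeries K)) (hmonic : g.Monic) (hdeg : g.natDegree = m)
    (γ : Fin m → HahnSeries ℚ L)
    (hfact : g.map (toHahn K L) = ∏ i, (X - C (γ i)))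
    (Atil : Finset (Fin m)) (hcard : Atil.card = d)
    (hmax : ∀ A : Finset (Fin m), A.card = d → intNum γ A ≤ intNum γ Atil) :
    vg γ (∏ j ∈ Atil, (X - C (γ j))) = intNum γ Atil ∧
      ∀ q : Polynomial (HahnSeries ℚ L), q.Monic → q.natDegree = d →
        (∀ i, IsPuiseux (q.coeff i)) → vg γ q ≤ intNum γ Atil :=
  maximal_valuation_monic_degree_d_general L m d γ Atil hcard hmax
end

section
/- Let f_1, …, f_r be the distinct irreducible Weierstrass polynomial factors of f in K[[X]][Y], and set h_i = Π_{j≠i} f_j. Then f_i and h_i are coprime in K((X))[Y], so there exist a_i, b_i ∈ K[[X]][Y] and c_i ∈ ℕ with a_i f_i + b_i h_i = X^{c_i}. Moreover the normalization of K[[X]][Y]/⟨f_1⋯f_r⟩ is isomorphic to the direct sum ⊕_{i=1}^r of the normalizations of K[[X]][Y]/⟨f_i⟩, via (t_1 mod f_1, …, t_r mod f_r) ↦ Σ_i b_i h_i t_i / X^{c_i} mod f_1⋯f_r. -/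
open Polynomial

set_option synthInstance.maxHeartbeats 1000000
set_option maxHeartbeats 2000000

/-- The ring `B = K[[X]][Y]/⟨g⟩`. -/
def PSQuot (K : Type) [Field K] (g : Polynomial (PowerSeries K)) : Type :=
  (Polynomial (PowerSeries K)) ⧸ Ideal.span {g}

noncomputable instance (K : Type) [Field K] (g : Polynomial (PowerSeries K)) :
    CommRing (PSQuot K g) :=
  inferInstanceAs (CommRing ((Polynomial (PowerSeries K)) ⧸ Ideal.span {g}))

noncomputable instance (K : Type) [Field K] (g : Polynomial (PowerSeries K)) :
    Algebra (PowerSeries K) (PSQuot K g) :=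
  inferInstanceAs (Algebra (PowerSeries K) ((Polynomial (PowerSeries K)) ⧸ Ideal.span {g}))

/-- The residue class map `K[[X]][Y] → B`. -/
noncomputable def psMk (K : Type) [Field K] (g : Polynomial (PowerSeries K)) :
    Polynomial (PowerSeries K) →+* PSQuot K g :=
  Ideal.Quotient.mk (Ideal.span {g})

noncomputable instance (K : Type) [Field K] (g : Polynomial (PowerSeries K)) :
    Algebra (PowerSeries K) (FractionRing (PSQuot K g)) :=
  ((algebraMap (PSQuot K g) (FractionRing (PSQuot K g))).comp
    (algebraMap (PowerSeries K) (PSQuot K g))).toAlgebra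

/-- The integral closure of `B = K[[X]][Y]/⟨g⟩` in its total ring of fractions,
viewed as a `K[[X]]`-submodule. -/
noncomputable def normalizationSubmodule (K : Type) [Field K]
    (g : Polynomial (PowerSeries K)) :
    Submodule (PowerSeries K) (FractionRing (PSQuot K g)) :=
  (Subalgebra.toSubmodule
    (integralClosure (PSQuot K g) (FractionRing (PSQuot K g)))).restrictScalars
    (PowerSeries K)

/-- The image of `x` in the total ring of fractions of `B`. -/
noncomputable def xElt (K : Type) [Field K] (g : Polynomial (PowerSeries K)) :
    FractionRing (PSQuot K g) :=
  algebraMap (PSQuot K g) (FractionRing (PSQuot K g)) (psMk K g (C PowerSeries.X))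

/-!
Over `K((X))` the distinct monic irreducible `f i` stay irreducible (Gauss's lemma), hence
pairwise coprime, and clearing denominators in a Bézout relation gives
`a i * f i + b i * h i = X ^ c i`, since a nonzero power series is `X ^ c` times a unit.

For pairwise non-associate primes `p i` of a ring `A`, a class in `A ⧸ (∏ p i)` is a
non-zero-divisor iff it lies in no `(p i)`, so the total ring of fractions of `A ⧸ (∏ p i)` embeds
into `∏ Frac (A ⧸ (p i))`. Any relation `a * p i + b * h i = s` with `s` in no `(p j)` makes
`b * h i * t / s` map to `t` in the `i`-th factor and to `0` elsewhere, so the embedding is onto.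
Integrality over `A ⧸ (∏ p i)` is then checked componentwise, and the isomorphism restricts to
the normalizations.
-/

section IntegralPi

variable {R L : Type*} [CommRing R] [CommRing L] [Algebra R L] {ι : Type*} [Fintype ι]
  {S F : ι → Type*} [∀ i, CommRing (S i)] [∀ i, CommRing (F i)] [∀ i, Algebra (S i) (F i)]
  (π : ∀ i, R →+* S i)

theorem isIntegral_iff_forall_isIntegral_apply (hπ : ∀ i, Function.Surjective (π i))
    (Ψ : L →+* Π i, F i) (hΨ : Function.Injective Ψ)
    (hcomp : ∀ i r, Ψ (algebraMap R L r) i = algebraMap (S i) (F i) (π i r)) (w : L) :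
    IsIntegral R w ↔ ∀ i, IsIntegral (S i) (Ψ w i) := by
  have hcomp' : ∀ i, ((Pi.evalRingHom F i).comp Ψ).comp (algebraMap R L) =
      (algebraMap (S i) (F i)).comp (π i) := fun i => RingHom.ext (hcomp i)
  refine ⟨fun hw i => hw.map_of_comp_eq (π i) ((Pi.evalRingHom F i).comp Ψ) (hcomp' i).symm,
    fun hw => ?_⟩
  choose q hqm hq using hw
  choose Q hQ _ hQm using fun i => Polynomial.lifts_and_natDegree_eq_and_monic
    ((Polynomial.mem_lifts _).2 (Polynomial.map_surjective _ (hπ i) (q i))) (hqm i)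
  -- The product of monic lifts of the componentwise equations kills every component.
  refine ⟨∏ i, Q i, Polynomial.monic_prod_of_monic _ _ fun i _ => hQm i, hΨ (funext fun j => ?_)⟩
  change ((Pi.evalRingHom F j).comp Ψ) (Polynomial.eval₂ _ w _) = (Pi.evalRingHom F j).comp Ψ 0
  rw [Polynomial.hom_eval₂, hcomp', map_zero, Polynomial.eval₂_finsetProd]
  refine Finset.prod_eq_zero (Finset.mem_univ j) ?_
  rw [← Polynomial.eval₂_map, hQ, ← hq j]
  rfl

noncomputable def integralClosureEquivPi (hπ : ∀ i, Function.Surjective (π i))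
    (Θ : L ≃+* Π i, F i) (hcomp : ∀ i r, Θ (algebraMap R L r) i = algebraMap (S i) (F i) (π i r)) :
    integralClosure R L ≃+* Π i, integralClosure (S i) (F i) :=
  have hint := isIntegral_iff_forall_isIntegral_apply π hπ Θ.toRingHom Θ.injective hcomp
  { toFun := fun w i => ⟨Θ w i, (hint w).1 w.2 i⟩
    invFun := fun v => ⟨Θ.symm fun i => v i, (hint _).2 fun i => by
      simpa only [RingEquiv.toRingHom_eq_coe, RingHom.coe_coe, RingEquiv.apply_symm_apply]
        using (mem_integralClosure_iff _ _).1 (v i).2⟩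
    left_inv := fun w => Subtype.ext (Θ.symm_apply_apply w)
    right_inv := fun v => funext fun i => Subtype.ext (by simp)
    map_mul' := fun x y => funext fun i => Subtype.ext (by simp)
    map_add' := fun x y => funext fun i => Subtype.ext (by simp) }

end IntegralPi

section Branches

open Ideal.Quotient

variable {A : Type*} [CommRing A]

theorem Prime.algebraMap_mk_eq_zero_iff {q : A} (hq : Prime q) (a : A) :
    algebraMap (A ⧸ Ideal.span {q}) (FractionRing (A ⧸ Ideal.span {q})) (mk _ a) = 0 ↔
      q ∣ a := by
  have : (Ideal.span {q}).IsPrime := (Ideal.span_singleton_prime hq.ne_zero).2 hq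
  rw [IsFractionRing.to_map_eq_zero_iff, eq_zero_iff_dvd]

theorem Prime.isUnit_algebraMap_mk_iff {q : A} (hq : Prime q) (a : A) :
    IsUnit (algebraMap (A ⧸ Ideal.span {q}) (FractionRing (A ⧸ Ideal.span {q})) (mk _ a)) ↔
      ¬ q ∣ a := by
  have : (Ideal.span {q}).IsPrime := (Ideal.span_singleton_prime hq.ne_zero).2 hq
  rw [isUnit_iff_ne_zero, Ne, hq.algebraMap_mk_eq_zero_iff]

variable {ι : Type*} {p : ι → A}

theorem Finset.prod_dvd_of_pairwise_not_dvd_of_prime (hp : ∀ i, Prime (p i))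
    (hnd : Pairwise fun i j => ¬ p i ∣ p j) (s : Finset ι) {a : A} (h : ∀ i ∈ s, p i ∣ a) :
    ∏ i ∈ s, p i ∣ a := by
  classical
  induction s using Finset.induction_on generalizing a with
  | empty => simp
  | insert k s hk ih =>
    obtain ⟨b, rfl⟩ := h k (s.mem_insert_self k)
    have hb : ∀ i ∈ s, p i ∣ b := fun i hi =>
      ((hp i).dvd_or_dvd (h i (s.mem_insert_of_mem hi))).resolve_left
        (hnd fun hik => hk (hik ▸ hi))
    rw [Finset.prod_insert hk]
    exact mul_dvd_mul_left _ (ih hb)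

variable [Fintype ι]

theorem not_dvd_prod_erase_of_pairwise_not_dvd [DecidableEq ι] (hp : ∀ i, Prime (p i))
    (hnd : Pairwise fun i j => ¬ p i ∣ p j) (i : ι) : ¬ p i ∣ ∏ j ∈ Finset.univ.erase i, p j := by
  intro h
  obtain ⟨j, hj, hdvd⟩ := (hp i).exists_mem_finset_dvd h
  exact hnd (Finset.ne_of_mem_erase hj).symm hdvd

theorem mk_mem_nonZeroDivisors_quotient_prod_iff (hp : ∀ i, Prime (p i))
    (hnd : Pairwise fun i j => ¬ p i ∣ p j) (a : A) :
    mk (Ideal.span {∏ i, p i}) a ∈ nonZeroDivisors (A ⧸ Ideal.span {∏ i, p i}) ↔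
      ∀ i, ¬ p i ∣ a := by
  classical
  constructor
  · rintro ha i ⟨b, rfl⟩
    have hzero : mk (Ideal.span {∏ i, p i}) (∏ j ∈ Finset.univ.erase i, p j) *
        mk _ (p i * b) = 0 := by
      rw [← map_mul, eq_zero_iff_dvd, ← Finset.mul_prod_erase _ _ (Finset.mem_univ i)]
      exact ⟨b, by ring⟩
    have := (eq_zero_iff_dvd _ _).1 (ha.2 _ hzero)
    exact not_dvd_prod_erase_of_pairwise_not_dvd hp hnd i
      ((Finset.dvd_prod_of_mem p (Finset.mem_univ i)).trans this)
  · intro ha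
    rw [mem_nonZeroDivisors_iff_right]
    rintro z hz
    obtain ⟨c, rfl⟩ := mk_surjective z
    rw [← map_mul, eq_zero_iff_dvd] at hz
    rw [eq_zero_iff_dvd]
    exact Finset.prod_dvd_of_pairwise_not_dvd_of_prime hp hnd _ fun i _ =>
      ((hp i).dvd_or_dvd ((Finset.dvd_prod_of_mem p (Finset.mem_univ i)).trans hz)).resolve_right
        (ha i)

variable (p) in
noncomputable def toBranch (i : ι) : A ⧸ Ideal.span {∏ i, p i} →+* A ⧸ Ideal.span {p i} :=
  factor (Ideal.span_singleton_le_span_singleton.2 (Finset.dvd_prod_of_mem p (Finset.mem_univ i)))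

theorem toBranch_surjective (i : ι) : Function.Surjective (toBranch p i) :=
  factor_surjective _

variable (p) in
noncomputable def branchFrac (i : ι) :
    A ⧸ Ideal.span {∏ i, p i} →+* FractionRing (A ⧸ Ideal.span {p i}) :=
  (algebraMap _ _).comp (toBranch p i)

theorem isUnit_pi_branchFrac (hp : ∀ i, Prime (p i)) (hnd : Pairwise fun i j => ¬ p i ∣ p j)
    (s : nonZeroDivisors (A ⧸ Ideal.span {∏ i, p i})) : IsUnit (RingHom.pi (branchFrac p) s) := by
  obtain ⟨a, ha⟩ := mk_surjective (s : A ⧸ Ideal.span {∏ i, p i})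
  have hs := s.2
  rw [← ha, mk_mem_nonZeroDivisors_quotient_prod_iff hp hnd] at hs
  rw [← ha, Pi.isUnit_iff]
  exact fun i => ((hp i).isUnit_algebraMap_mk_iff a).2 (hs i)

noncomputable def fracToBranches (hp : ∀ i, Prime (p i)) (hnd : Pairwise fun i j => ¬ p i ∣ p j) :
    FractionRing (A ⧸ Ideal.span {∏ i, p i}) →+* Π i, FractionRing (A ⧸ Ideal.span {p i}) :=
  IsLocalization.lift (isUnit_pi_branchFrac hp hnd)

variable (hp : ∀ i, Prime (p i)) (hnd : Pairwise fun i j => ¬ p i ∣ p j)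

theorem fracToBranches_algebraMap (z : A ⧸ Ideal.span {∏ i, p i}) :
    fracToBranches hp hnd (algebraMap _ _ z) = fun i => algebraMap _ _ (toBranch p i z) :=
  IsLocalization.lift_eq _ _

theorem fracToBranches_algebraMap_mk (a : A) :
    fracToBranches hp hnd (algebraMap _ _ (mk (Ideal.span {∏ i, p i}) a)) =
      fun i => algebraMap _ _ (mk (Ideal.span {p i}) a) :=
  fracToBranches_algebraMap hp hnd _

theorem fracToBranches_injective : Function.Injective (fracToBranches hp hnd) := by
  have hinj : Function.Injective (RingHom.pi (branchFrac p)) := by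
    rw [injective_iff_map_eq_zero]
    intro z hz
    obtain ⟨a, rfl⟩ := mk_surjective z
    rw [eq_zero_iff_dvd]
    refine Finset.prod_dvd_of_pairwise_not_dvd_of_prime hp hnd _ fun i _ => ?_
    exact ((hp i).algebraMap_mk_eq_zero_iff a).1 (congrFun hz i)
  refine IsLocalization.lift_injective_iff _ |>.2 fun x y => ?_
  exact (IsFractionRing.injective _ _).eq_iff.trans hinj.eq_iff.symm

theorem isUnit_of_isUnit_fracToBranches {w : FractionRing (A ⧸ Ideal.span {∏ i, p i})}
    (hw : IsUnit (fracToBranches hp hnd w)) : IsUnit w := by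
  obtain ⟨⟨z, s⟩, rfl⟩ :=
    IsLocalization.mk'_surjective (nonZeroDivisors (A ⧸ Ideal.span {∏ i, p i})) w
  obtain ⟨a, rfl⟩ := mk_surjective z
  have hspec := congrArg (fracToBranches hp hnd)
    (IsLocalization.mk'_spec (FractionRing _) (mk _ a) s)
  rw [map_mul, fracToBranches_algebraMap_mk] at hspec
  have ha : ∀ i, ¬ p i ∣ a := fun i => ((hp i).isUnit_algebraMap_mk_iff a).1 <| by
    have := hw.mul (IsLocalization.map_units _ s |>.map (fracToBranches hp hnd))
    rw [hspec, Pi.isUnit_iff] at this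
    exact this i
  have hunit := IsLocalization.map_units (FractionRing (A ⧸ Ideal.span {∏ i, p i}))
    ⟨_, (mk_mem_nonZeroDivisors_quotient_prod_iff hp hnd a).2 ha⟩
  rw [← IsLocalization.mk'_spec (FractionRing _) (mk _ a) s] at hunit
  exact isUnit_of_mul_isUnit_left hunit

theorem exists_fracToBranches_eq_single [DecidableEq ι] {i : ι} {a b s : A}
    (hab : a * p i + b * ∏ j ∈ Finset.univ.erase i, p j = s) (hs : ∀ j, ¬ p j ∣ s) (t : A) :
    ∃ w, w * algebraMap _ _ (mk (Ideal.span {∏ i, p i}) s) =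
        algebraMap _ _ (mk (Ideal.span {∏ i, p i}) (b * (∏ j ∈ Finset.univ.erase i, p j) * t)) ∧
      fracToBranches hp hnd w = Pi.single i (algebraMap _ _ (mk (Ideal.span {p i}) t)) := by
  obtain ⟨u, hu⟩ : IsUnit (algebraMap _ (FractionRing (A ⧸ Ideal.span {∏ i, p i}))
      (mk (Ideal.span {∏ i, p i}) s)) :=
    IsLocalization.map_units _ ⟨_, (mk_mem_nonZeroDivisors_quotient_prod_iff hp hnd s).2 hs⟩
  set w := algebraMap _ (FractionRing (A ⧸ Ideal.span {∏ i, p i}))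
    (mk (Ideal.span {∏ i, p i}) (b * (∏ j ∈ Finset.univ.erase i, p j) * t)) * ↑u⁻¹
  have hw : w * algebraMap _ _ (mk (Ideal.span {∏ i, p i}) s) =
      algebraMap _ _ (mk (Ideal.span {∏ i, p i}) (b * (∏ j ∈ Finset.univ.erase i, p j) * t)) := by
    rw [← hu, mul_assoc, Units.inv_mul, mul_one]
  refine ⟨w, hw, funext fun j => ?_⟩
  have hwj := congrFun (congrArg (fracToBranches hp hnd) hw) j
  rw [map_mul, fracToBranches_algebraMap_mk, fracToBranches_algebraMap_mk, Pi.mul_apply] at hwj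
  refine (((hp j).isUnit_algebraMap_mk_iff s).2 (hs j)).mul_left_injective ?_
  dsimp only at hwj ⊢
  rw [hwj]
  rcases eq_or_ne j i with rfl | hji
  · rw [Pi.single_eq_same, ← map_mul, ← map_mul]
    congr 1
    rw [Ideal.Quotient.eq, Ideal.mem_span_singleton, ← hab]
    exact ⟨-(a * t), by ring⟩
  · rw [Pi.single_eq_of_ne hji, zero_mul, (hp j).algebraMap_mk_eq_zero_iff]
    exact ((Finset.dvd_prod_of_mem p (Finset.mem_erase.2 ⟨hji, Finset.mem_univ j⟩)).mul_left
      b).mul_right t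

theorem exists_fracToBranches_eq (t : ι → A) :
    ∃ w, fracToBranches hp hnd w = fun i => algebraMap _ _ (mk (Ideal.span {p i}) (t i)) := by
  classical
  -- Already the trivial relation `1 * p i + 1 * h i = p i + h i` produces the idempotents.
  have hs : ∀ i j, ¬ p j ∣ p i + ∏ k ∈ Finset.univ.erase i, p k := by
    intro i j hj
    rcases eq_or_ne j i with rfl | hji
    · exact not_dvd_prod_erase_of_pairwise_not_dvd hp hnd j ((dvd_add_right (dvd_refl _)).1 hj)
    · exact hnd hji ((dvd_add_left
        (Finset.dvd_prod_of_mem p (Finset.mem_erase.2 ⟨hji, Finset.mem_univ j⟩))).1 hj)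
  choose w _ hw using fun i => exists_fracToBranches_eq_single hp hnd (a := 1) (b := 1)
    (by rw [one_mul, one_mul]) (hs i) (t i)
  refine ⟨∑ i, w i, ?_⟩
  simp only [map_sum, hw, Finset.univ_sum_single]

theorem fracToBranches_surjective : Function.Surjective (fracToBranches hp hnd) := by
  intro v
  choose x hx using fun i => IsLocalization.surj (nonZeroDivisors (A ⧸ Ideal.span {p i})) (v i)
  choose P hP using fun i => mk_surjective (x i).1
  choose Q hQ using fun i => mk_surjective ((x i).2 : A ⧸ Ideal.span {p i})
  obtain ⟨wP, hwP⟩ := exists_fracToBranches_eq hp hnd P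
  obtain ⟨wQ, hwQ⟩ := exists_fracToBranches_eq hp hnd Q
  have hQunit : ∀ i,
      IsUnit (algebraMap _ (FractionRing (A ⧸ Ideal.span {p i})) (mk (Ideal.span {p i}) (Q i))) :=
    fun i => hQ i ▸ IsLocalization.map_units _ (x i).2
  obtain ⟨u, rfl⟩ := isUnit_of_isUnit_fracToBranches hp hnd (hwQ ▸ Pi.isUnit_iff.2 hQunit)
  refine ⟨wP * ↑u⁻¹, funext fun i => (hQunit i).mul_left_injective ?_⟩
  calc fracToBranches hp hnd (wP * ↑u⁻¹) i * algebraMap _ _ (mk _ (Q i))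
      = fracToBranches hp hnd (wP * ↑u⁻¹ * u) i := by
        rw [map_mul _ (wP * _), hwQ, Pi.mul_apply]
    _ = v i * algebraMap _ _ (mk _ (Q i)) := by
      rw [mul_assoc, Units.inv_mul, mul_one, hwP, hQ, hx, ← hP]

noncomputable def fracEquivBranches :
    FractionRing (A ⧸ Ideal.span {∏ i, p i}) ≃+* Π i, FractionRing (A ⧸ Ideal.span {p i}) :=
  RingEquiv.ofBijective _ ⟨fracToBranches_injective hp hnd, fracToBranches_surjective hp hnd⟩

noncomputable def normalizationEquivBranches :
    integralClosure (A ⧸ Ideal.span {∏ i, p i}) (FractionRing (A ⧸ Ideal.span {∏ i, p i})) ≃+*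
      Π i, integralClosure (A ⧸ Ideal.span {p i}) (FractionRing (A ⧸ Ideal.span {p i})) :=
  integralClosureEquivPi (toBranch p) toBranch_surjective (fracEquivBranches hp hnd)
    fun i z => congrFun (fracToBranches_algebraMap hp hnd z) i

theorem fracToBranches_normalizationEquivBranches_symm
    (v : Π i, integralClosure (A ⧸ Ideal.span {p i}) (FractionRing (A ⧸ Ideal.span {p i}))) :
    fracToBranches hp hnd ((normalizationEquivBranches hp hnd).symm v) =
      fun i => (v i : FractionRing (A ⧸ Ideal.span {p i})) :=
  (fracEquivBranches hp hnd).apply_symm_apply _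

theorem exists_normalizationEquivBranches_symm_eq_sum [DecidableEq ι] {a b s : ι → A}
    (hab : ∀ i, a i * p i + b i * ∏ j ∈ Finset.univ.erase i, p j = s i)
    (hs : ∀ i j, ¬ p j ∣ s i) (t : ι → A) :
    ∃ z : ι → FractionRing (A ⧸ Ideal.span {∏ i, p i}),
      (∀ i, z i * algebraMap _ _ (mk (Ideal.span {∏ i, p i}) (s i)) =
        algebraMap _ _
          (mk (Ideal.span {∏ i, p i}) (b i * (∏ j ∈ Finset.univ.erase i, p j) * t i))) ∧
      ((normalizationEquivBranches hp hnd).symm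
          (fun i => ⟨algebraMap _ _ (mk (Ideal.span {p i}) (t i)), Subalgebra.algebraMap_mem _ _⟩) :
        FractionRing (A ⧸ Ideal.span {∏ i, p i})) = ∑ i, z i := by
  choose z hz hzΨ using fun i => exists_fracToBranches_eq_single hp hnd (hab i) (hs i) (t i)
  refine ⟨z, hz, fracToBranches_injective hp hnd ?_⟩
  rw [fracToBranches_normalizationEquivBranches_symm, map_sum]
  simp only [hzΨ, Finset.univ_sum_single]

end Branches

namespace Polynomial

theorem Monic.eq_of_irreducible_of_dvd {R : Type*} [CommRing R] [IsDomain R] {f g : R[X]}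
    (hf : f.Monic) (hg : g.Monic) (hfi : Irreducible f) (hgi : Irreducible g) (h : f ∣ g) :
    f = g :=
  eq_of_monic_of_associated hf hg (hfi.associated_of_dvd hgi h)

theorem Monic.not_dvd_C_of_irreducible {R : Type*} [CommRing R] [IsDomain R]
    {f : R[X]} (hf : f.Monic) (hirr : Irreducible f) {a : R} (ha : a ≠ 0) : ¬ f ∣ C a := by
  intro h
  have hdeg := natDegree_le_of_dvd h (C_ne_zero.2 ha)
  rw [natDegree_C, Nat.le_zero, hf.natDegree_eq_zero] at hdeg
  exact hirr.not_isUnit (hdeg ▸ isUnit_one)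

variable {R F : Type*} [CommRing R] [Field F] [Algebra R F] [IsFractionRing R F]

theorem isCoprime_map_prod_erase_of_monic_irreducible [IsDomain R] [IsIntegrallyClosed R]
    {ι : Type*} [Fintype ι] [DecidableEq ι] {f : ι → R[X]} (hirr : ∀ i, Irreducible (f i))
    (hmon : ∀ i, (f i).Monic) (hdist : Pairwise fun i j => f i ≠ f j) (i : ι) :
    IsCoprime ((f i).map (algebraMap R F))
      ((∏ j ∈ Finset.univ.erase i, f j).map (algebraMap R F)) := by
  have hirrF : ∀ k, Irreducible ((f k).map (algebraMap R F)) := fun k =>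
    (hmon k).irreducible_iff_irreducible_map_fraction_map.1 (hirr k)
  rw [Polynomial.map_prod]
  refine IsCoprime.prod_right fun j hj => (hirrF i).coprime_iff_not_dvd.2 fun hdvd => ?_
  refine hdist (Finset.ne_of_mem_erase hj).symm (map_injective _ (IsFractionRing.injective R F) ?_)
  exact ((hmon i).map _).eq_of_irreducible_of_dvd ((hmon j).map _) (hirrF i) (hirrF j) hdvd

theorem exists_mul_add_mul_eq_C_of_isCoprime_map [IsDomain R] {f g : R[X]}
    (h : IsCoprime (f.map (algebraMap R F)) (g.map (algebraMap R F))) :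
    ∃ a b : R[X], ∃ d : R, d ≠ 0 ∧ a * f + b * g = C d := by
  obtain ⟨u, v, huv⟩ := h
  obtain ⟨du, hdu, hu⟩ := IsLocalization.integerNormalization_spec (nonZeroDivisors R) u
  obtain ⟨dv, hdv, hv⟩ := IsLocalization.integerNormalization_spec (nonZeroDivisors R) v
  refine ⟨C dv * IsLocalization.integerNormalization (nonZeroDivisors R) u,
    C du * IsLocalization.integerNormalization (nonZeroDivisors R) v, du * dv,
    nonZeroDivisors.ne_zero (mul_mem hdu hdv), map_injective _ (IsFractionRing.injective R F) ?_⟩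
  simp only [Polynomial.map_add, Polynomial.map_mul, map_C, hu, hv, Algebra.smul_def,
    Polynomial.algebraMap_apply, map_mul]
  linear_combination C (algebraMap R F du) * C (algebraMap R F dv) * huv

end Polynomial

namespace PowerSeries

variable {K : Type*} [Field K]

theorem exists_eq_X_pow_mul_unit {d : PowerSeries K} (hd : d ≠ 0) :
    ∃ (c : ℕ) (u : (PowerSeries K)ˣ), d = X ^ c * (u : PowerSeries K) := by
  obtain ⟨c, u, rfl⟩ := IsDiscreteValuationRing.eq_unit_mul_pow_irreducible hd X_irreducible
  exact ⟨c, u, mul_comm _ _⟩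

theorem exists_mul_add_mul_eq_C_X_pow_of_isCoprime_map {f g : Polynomial (PowerSeries K)}
    (h : IsCoprime (f.map (algebraMap _ (LaurentSeries K)))
      (g.map (algebraMap _ (LaurentSeries K)))) :
    ∃ a b : Polynomial (PowerSeries K), ∃ c : ℕ, a * f + b * g = Polynomial.C X ^ c := by
  obtain ⟨a, b, d, hd, hab⟩ := Polynomial.exists_mul_add_mul_eq_C_of_isCoprime_map h
  obtain ⟨c, u, rfl⟩ := exists_eq_X_pow_mul_unit hd
  refine ⟨Polynomial.C (↑u⁻¹ : PowerSeries K) * a, Polynomial.C (↑u⁻¹ : PowerSeries K) * b, c,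
    ?_⟩
  rw [mul_assoc, mul_assoc, ← mul_add, hab, ← Polynomial.C_mul, ← Polynomial.C_pow, mul_left_comm,
    Units.inv_mul, mul_one]

end PowerSeries

theorem splitting_of_normalization_general
    (K : Type) [Field K] (r : ℕ)
    (f : Fin r → Polynomial (PowerSeries K))
    (hirr : ∀ i, Irreducible (f i)) (hmon : ∀ i, (f i).Monic)
    (hdist : ∀ i j, i ≠ j → f i ≠ f j) :
    (∀ i : Fin r,
      IsCoprime ((f i).map (HahnSeries.ofPowerSeries ℤ K))
        ((∏ j ∈ Finset.univ.erase i, f j).map (HahnSeries.ofPowerSeries ℤ K))) ∧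
    ∃ (a b : Fin r → Polynomial (PowerSeries K)) (c : Fin r → ℕ),
      (∀ i, a i * f i + b i * (∏ j ∈ Finset.univ.erase i, f j) =
        (C PowerSeries.X) ^ (c i)) ∧
      ∃ equiv : (∀ i : Fin r,
            (integralClosure (PSQuot K (f i)) (FractionRing (PSQuot K (f i))))) ≃+*
          (integralClosure (PSQuot K (∏ i, f i)) (FractionRing (PSQuot K (∏ i, f i)))),
        ∀ t : Fin r → Polynomial (PowerSeries K),
          ∃ z : Fin r → FractionRing (PSQuot K (∏ i, f i)),
            (∀ i, z i * (xElt K (∏ i, f i)) ^ (c i) =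
              algebraMap (PSQuot K (∏ i, f i)) (FractionRing (PSQuot K (∏ i, f i)))
                (psMk K (∏ i, f i) (b i * (∏ j ∈ Finset.univ.erase i, f j) * t i))) ∧
            (equiv (fun i =>
                ⟨algebraMap (PSQuot K (f i)) (FractionRing (PSQuot K (f i)))
                    (psMk K (f i) (t i)),
                  (integralClosure _ _).algebraMap_mem _⟩) : FractionRing (PSQuot K (∏ i, f i)))
              = ∑ i, z i := by
  have hp : ∀ i, Prime (f i) := fun i => (hirr i).prime
  have hnd : Pairwise fun i j => ¬ f i ∣ f j := fun i j hij hdvd =>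
    hdist i j hij ((hmon i).eq_of_irreducible_of_dvd (hmon j) (hirr i) (hirr j) hdvd)
  have hcop := Polynomial.isCoprime_map_prod_erase_of_monic_irreducible (F := LaurentSeries K)
    hirr hmon fun i j => hdist i j
  choose a b c hab using fun i =>
    PowerSeries.exists_mul_add_mul_eq_C_X_pow_of_isCoprime_map (hcop i)
  have hX : ∀ i j, ¬ f j ∣ C PowerSeries.X ^ c i := fun i j h =>
    (hmon j).not_dvd_C_of_irreducible (hirr j) PowerSeries.X_ne_zero ((hp j).dvd_of_dvd_pow h)
  refine ⟨hcop, a, b, c, hab, (normalizationEquivBranches hp hnd).symm, fun t => ?_⟩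
  obtain ⟨z, hz, hsum⟩ := exists_normalizationEquivBranches_symm_eq_sum hp hnd hab hX t
  exact ⟨z, fun i => by rw [xElt, ← map_pow, ← map_pow]; exact hz i, hsum⟩

/-- **Splitting of the normalization along the branches.**
If `f_1, …, f_r` are the distinct irreducible Weierstrass factors of `f`, then
`f_i` is coprime to `h_i = ∏_{j≠i} f_j` in `K((X))[Y]`, there are Bézout relations
`a_i f_i + b_i h_i = X^{c_i}` in `K[[X]][Y]`, and the normalization of
`K[[X]][Y]/⟨f_1⋯f_r⟩` splits as the direct sum of the normalizations of the
`K[[X]][Y]/⟨f_i⟩`, via `(t_1, …, t_r) ↦ ∑_i b_i h_i t_i / X^{c_i}`. -/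
theorem splitting_of_normalization
    (K : Type) [Field K] [CharZero K] (r : ℕ) (hr : 0 < r)
    (f : Fin r → Polynomial (PowerSeries K))
    (hirr : ∀ i, Irreducible (f i)) (hmon : ∀ i, (f i).Monic)
    (hW : ∀ i, ∀ j < (f i).natDegree, PowerSeries.constantCoeff ((f i).coeff j) = 0)
    (hdist : ∀ i j, i ≠ j → f i ≠ f j) :
    (∀ i : Fin r,
      IsCoprime ((f i).map (HahnSeries.ofPowerSeries ℤ K))
        ((∏ j ∈ Finset.univ.erase i, f j).map (HahnSeries.ofPowerSeries ℤ K))) ∧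
    ∃ (a b : Fin r → Polynomial (PowerSeries K)) (c : Fin r → ℕ),
      (∀ i, a i * f i + b i * (∏ j ∈ Finset.univ.erase i, f j) =
        (C PowerSeries.X) ^ (c i)) ∧
      ∃ equiv : (∀ i : Fin r,
            (integralClosure (PSQuot K (f i)) (FractionRing (PSQuot K (f i))))) ≃+*
          (integralClosure (PSQuot K (∏ i, f i)) (FractionRing (PSQuot K (∏ i, f i)))),
        ∀ t : Fin r → Polynomial (PowerSeries K),
          ∃ z : Fin r → FractionRing (PSQuot K (∏ i, f i)),
            (∀ i, z i * (xElt K (∏ i, f i)) ^ (c i) =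
              algebraMap (PSQuot K (∏ i, f i)) (FractionRing (PSQuot K (∏ i, f i)))
                (psMk K (∏ i, f i) (b i * (∏ j ∈ Finset.univ.erase i, f j) * t i))) ∧
            (equiv (fun i =>
                ⟨algebraMap (PSQuot K (f i)) (FractionRing (PSQuot K (f i)))
                    (psMk K (f i) (t i)),
                  (integralClosure _ _).algebraMap_mem _⟩) : FractionRing (PSQuot K (∏ i, f i)))
              = ∑ i, z i :=
  splitting_of_normalization_general K r f hirr hmon hdist
end

section
/- Let g ∈ K[[X]][Y] be an irreducible Weierstrass polynomial of Y-degree m whose Puiseux expansions γ_1, …, γ_m all agree in terms of degree < t and have pairwise distinct conjugate terms α_i X^t, i.e. γ_i = a_1 X^{d_1} + ⋯ + a_k X^{d_k} + α_i X^t + ⋯ with a_j ∈ K, d_j ∈ ℕ. Let γ̄_i denote the truncation of γ_i to degree d_k, and set p_d = (Y − γ̄_1)⋯(Y − γ̄_d) ∈ K[X,Y] for 1 ≤ d ≤ m−1. Then p_d has maximal valuation v_g among all monic polynomials of Y-degree d, i.e. its integrality exponent is maximal. -/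
/-!
Any two distinct expansions `γ_i, γ_j` differ first in degree `t`, and each differs from the
common part `ρ` first in degree `t`, so `v_g((Y - ρ)^d) = d t`. For a monic `q` of degree `d`,
Lagrange interpolation at `d + 1` of the `γ_i` gives
`1 = lc q = ∑ i, q(γ_i) / ∏_{j ≠ i} (γ_i - γ_j)`; every denominator has valuation `d t`, so
some `q(γ_i)` has valuation at most `d t`.
-/

open Polynomial

namespace AddValuation

variable {R F Γ₀ ι : Type*}

theorem map_prod [CommRing R] [LinearOrderedAddCommMonoidWithTop Γ₀] (v : AddValuation R Γ₀)
    (s : Finset ι) (f : ι → R) : v (∏ i ∈ s, f i) = ∑ i ∈ s, v (f i) := by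
  classical
  induction s using Finset.induction_on with
  | empty => simp
  | insert a s ha ih => rw [Finset.prod_insert ha, Finset.sum_insert ha, map_mul, ih]

variable [Field F] [LinearOrderedAddCommGroupWithTop Γ₀] (v : AddValuation F Γ₀)

theorem exists_map_eval_le_map_prod_sub_s17 [DecidableEq ι] {s : Finset ι} {x : ι → F}
    (hx : Set.InjOn x s) {P : F[X]} (hP : P.Monic) (hs : s.card = P.natDegree + 1) :
    ∃ i ∈ s, v (P.eval (x i)) ≤ v (∏ j ∈ s.erase i, (x i - x j)) := by
  by_contra! hlt
  have hpos : ∀ i ∈ s, 0 < v (P.eval (x i) / ∏ j ∈ s.erase i, (x i - x j)) := fun i hi => by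
    rw [map_div, LinearOrderedAddCommGroupWithTop.sub_pos]
    exact Or.inl (hlt i hi)
  have hdeg : s.card = P.degree + 1 := by
    rw [hs, degree_eq_natDegree hP.ne_zero]; rfl
  have := v.map_lt_sum (by simp) hpos
  rw [← Lagrange.leadingCoeff_eq_sum hx hdeg, hP.leadingCoeff, v.map_one] at this
  exact lt_irrefl _ this

theorem exists_map_eval_le_nsmul {s : Finset ι} {x : ι → F} {c : Γ₀} (hc : c ≠ ⊤)
    (hdist : ∀ i ∈ s, ∀ j ∈ s, i ≠ j → v (x i - x j) = c) {P : F[X]} (hP : P.Monic)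
    (hs : s.card = P.natDegree + 1) : ∃ i ∈ s, v (P.eval (x i)) ≤ P.natDegree • c := by
  classical
  have hx : Set.InjOn x s := fun i hi j hj hij => by
    by_contra hne
    exact hc (by rw [← hdist i hi j hj hne, hij, sub_self, v.map_zero])
  obtain ⟨i, hi, hle⟩ := v.exists_map_eval_le_map_prod_sub_s17 hx hP hs
  refine ⟨i, hi, hle.trans_eq ?_⟩
  rw [v.map_prod, Finset.sum_congr rfl fun j hj => hdist i hi j (Finset.mem_of_mem_erase hj)
    (Finset.ne_of_mem_erase hj).symm, Finset.sum_const, Finset.card_erase_of_mem hi, hs,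
    Nat.add_sub_cancel]

end AddValuation

theorem HahnSeries.orderTop_sub_eq {Γ R : Type*} [LinearOrder Γ] [AddGroup R]
    {x y : HahnSeries Γ R} {g : Γ} (hlt : ∀ g' < g, x.coeff g' = y.coeff g')
    (hg : x.coeff g ≠ y.coeff g) : (x - y).orderTop = g :=
  HahnSeries.orderTop_eq_of_le (by simpa [sub_eq_zero] using hg) fun g' hg' =>
    le_of_not_gt fun h => hg' (by simp [hlt g' h])

theorem truncated_factor_maximal_one_conjugate_term_general
    (L : Type) [Field L]
    (m d : ℕ) (hdm : d < m)
    (γ : Fin m → HahnSeries ℚ L)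
    (t : ℚ) (ρ : HahnSeries ℚ L)
    (hρlt : ∀ q ∈ ρ.support, q < t)
    (hagree : ∀ i, ∀ q : ℚ, q < t → (γ i).coeff q = ρ.coeff q)
    (hα : ∀ i, (γ i).coeff t ≠ 0)
    (hαdist : ∀ i j, i ≠ j → (γ i).coeff t ≠ (γ j).coeff t) :
    ∀ q : Polynomial (HahnSeries ℚ L), q.Monic → q.natDegree = d →
      (∀ i, IsPuiseux (q.coeff i)) →
      vg γ q ≤ vg γ ((X - C ρ) ^ d) := by
  intro q hqm hqd _
  have hρt : ρ.coeff t = 0 := by_contra fun h => lt_irrefl t (hρlt t h)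
  have hdist : ∀ i j, i ≠ j → (γ i - γ j).orderTop = t := fun i j hij =>
    HahnSeries.orderTop_sub_eq (fun s hs => by rw [hagree i s hs, hagree j s hs]) (hαdist i j hij)
  have hρ : ∀ i, (γ i - ρ).orderTop = t := fun i =>
    HahnSeries.orderTop_sub_eq (hagree i) (by rw [hρt]; exact hα i)
  obtain ⟨s, -, hs⟩ := Finset.exists_subset_card_eq (s := (Finset.univ : Finset (Fin m)))
    (by rw [Finset.card_univ, Fintype.card_fin]; exact hdm : d + 1 ≤ _)
  obtain ⟨i, -, hi⟩ := (HahnSeries.addVal ℚ L).exists_map_eval_le_nsmul WithTop.coe_ne_top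
    (fun i _ j _ hij => hdist i j hij) hqm (hqd ▸ hs)
  calc vg γ q ≤ (q.eval (γ i)).orderTop := Finset.inf_le (Finset.mem_univ i)
    _ ≤ d • (t : WithTop ℚ) := by rwa [HahnSeries.addVal_apply, hqd] at hi
    _ ≤ vg γ ((X - C ρ) ^ d) := Finset.le_inf fun j _ => by
      rw [eval_pow, eval_sub, eval_X, eval_C, ← HahnSeries.addVal_apply, AddValuation.map_pow,
        HahnSeries.addVal_apply, hρ]

/-- **Maximality of the truncated factors in the one-conjugate-term case.**
Suppose the Puiseux expansions `γ_i` of the irreducible Weierstrass polynomial `g`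
all agree with a common rational part `ρ` (exponents in `ℕ`, coefficients in `K`,
finitely many terms) in all degrees `< t`, and have pairwise distinct (conjugate,
non-rational) coefficients `α_i` in degree `t`.  Then the polynomial
`p_d = (Y - γ̄_1)⋯(Y - γ̄_d) = (Y - ρ)^d` built from the truncations of the
expansions to their rational part has maximal valuation `v_g` among all monic
polynomials of degree `d` in `Y`, i.e. maximal integrality exponent. -/
theorem truncated_factor_maximal_one_conjugate_term
    (K L : Type) [Field K] [Field L] [Algebra K L] [CharZero K] [IsAlgClosed L]
    (m d : ℕ) (hd : 1 ≤ d) (hdm : d < m)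
    (g : Polynomial (PowerSeries K)) (hirr : Irreducible g) (hmon : g.Monic)
    (hdeg : g.natDegree = m)
    (hW : ∀ j < m, PowerSeries.constantCoeff (g.coeff j) = 0)
    (γ : Fin m → HahnSeries ℚ L)
    (hfact : g.map (toHahn K L) = ∏ i, (X - C (γ i)))
    (t : ℚ) (ρ : HahnSeries ℚ L)
    (hρfin : ρ.support.Finite)
    (hρnat : ∀ q ∈ ρ.support, ∃ k : ℕ, q = (k : ℚ))
    (hρK : ∀ q : ℚ, ρ.coeff q ∈ (algebraMap K L).range)
    (hρlt : ∀ q ∈ ρ.support, q < t)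
    (hagree : ∀ i, ∀ q : ℚ, q < t → (γ i).coeff q = ρ.coeff q)
    (hα : ∀ i, (γ i).coeff t ≠ 0)
    (hαdist : ∀ i j, i ≠ j → (γ i).coeff t ≠ (γ j).coeff t) :
    ∀ q : Polynomial (HahnSeries ℚ L), q.Monic → q.natDegree = d →
      (∀ i, IsPuiseux (q.coeff i)) →
      vg γ q ≤ vg γ ((X - C ρ) ^ d) :=
  truncated_factor_maximal_one_conjugate_term_general L m d hdm γ t ρ hρlt hagree hα hαdist
end
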